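/- Let H = (V,E) be a 3-hypergraph with a linear order ≺ on E, let E₃ be its set of cardinality-3 hyperedges, and let S ⊆ E₃. Call a pair (e,e') relevant if e ∈ S, e' ∈ E₃, e ∩ e' ≠ ∅ and e' ≺ e. Let D := {v ∈ V : e'∖e = {v} for some relevant pair (e,e')}, R := {e' ∈ E₃ : (e,e') is relevant for some e ∈ S}, and N := {e'∖e : (e,e') relevant and |e'∖e| = 2}. Define H' to be the hypergraph with vertex set V∖D and hyperedge set {e'' ∈ (E∖R) ∪ N : e'' ⊆ V∖D}. Then for every k ∈ ℕ, I'_S(H,k) = I_S(H',k). -/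

import Mathlib

attribute [local instance] Classical.propDecidable

/-- `I_S(H',k)` relative to a vertex set `Vset`: subsets `X ⊆ Vset` of cardinality `k` that are
independent in the underlying graph (no hyperedge of cardinality exactly 2 is contained in `X`)
and contain all hyperedges of `S`. -/
noncomputable def ISv {V : Type} [Fintype V] (Vset : Finset V) (E S : Finset (Finset V))
    (k : ℕ) : Finset (Finset V) :=
  Finset.univ.filter fun X => X ⊆ Vset ∧ X.card = k ∧
    (∀ e ∈ E, e.card = 2 → ¬ e ⊆ X) ∧ ∀ e ∈ S, e ⊆ X

/-- `I'_S(H,k)`: members of `I_S(H,k)` such that for every `e ∈ S` and every hyperedge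
`e' ∈ E₃` with `e ∩ e' ≠ ∅` and `e' ≺ e`, `e'` is not contained in `X`. -/
noncomputable def Iprime {V : Type} [Fintype V] [DecidableEq V] (E : Finset (Finset V))
    (r : Finset V → Finset V → Prop) (S : Finset (Finset V)) (k : ℕ) : Finset (Finset V) :=
  (ISv Finset.univ E S k).filter fun X =>
    ∀ e ∈ S, ∀ e' ∈ E, e'.card = 3 → (e ∩ e').Nonempty → r e' e → ¬ e' ⊆ X

/-- `D`: vertices `v` such that `e' \ e = {v}` for some relevant pair `(e,e')`. -/
noncomputable def Dset {V : Type} [Fintype V] [DecidableEq V] (E S : Finset (Finset V))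
    (r : Finset V → Finset V → Prop) : Finset V :=
  Finset.univ.filter fun v =>
    ∃ e ∈ S, ∃ e' ∈ E, e'.card = 3 ∧ (e ∩ e').Nonempty ∧ r e' e ∧ e' \ e = {v}

/-- `R`: hyperedges `e' ∈ E₃` appearing in some relevant pair `(e,e')` with `e ∈ S`. -/
noncomputable def Rset {V : Type} [Fintype V] [DecidableEq V] (E S : Finset (Finset V))
    (r : Finset V → Finset V → Prop) : Finset (Finset V) :=
  E.filter fun e' => e'.card = 3 ∧ ∃ e ∈ S, (e ∩ e').Nonempty ∧ r e' e

/-- `N`: the sets `e' \ e` of cardinality 2 for relevant pairs `(e,e')`. -/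
noncomputable def Nset {V : Type} [Fintype V] [DecidableEq V] (E S : Finset (Finset V))
    (r : Finset V → Finset V → Prop) : Finset (Finset V) :=
  ((S ×ˢ E).filter fun p =>
      p.2.card = 3 ∧ (p.1 ∩ p.2).Nonempty ∧ r p.2 p.1 ∧ (p.2 \ p.1).card = 2).image
    fun p => p.2 \ p.1

/-- The hyperedge set of `H'`: hyperedges of `(E ∖ R) ∪ N` contained in `V ∖ D`. -/
noncomputable def Eprime {V : Type} [Fintype V] [DecidableEq V] (E S : Finset (Finset V))
    (r : Finset V → Finset V → Prop) : Finset (Finset V) :=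
  ((E \ Rset E S r) ∪ Nset E S r).filter fun e'' => e'' ⊆ Finset.univ \ Dset E S r

/-!
Let `X` contain every `e ∈ S`. For a relevant pair `(e, e')` we have `e' ⊆ X` iff `e' \ e ⊆ X`,
and `e' \ e` has one or two elements (two 3-sets meeting in a vertex, distinct because `≺` is
irreflexive). Forbidding `e' ⊆ X` therefore amounts to deleting the vertex of `e' \ e` when it is
a singleton and to adding the graph edge `e' \ e` otherwise. Removing the 3-edges in `R` changes
no underlying graph, and discarding edges that leave `V \ D` is harmless once `X` avoids `D`.
-/

namespace Finset

variable {α : Type*} [DecidableEq α] {s t u : Finset α}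

theorem sdiff_subset_iff_of_subset (htu : t ⊆ u) : s \ t ⊆ u ↔ s ⊆ u := by
  rw [sdiff_le_iff, sup_of_le_right htu]

theorem card_sdiff_eq_one_or_eq_two (hs : #s = 3) (ht : #t = 3) (hst : (t ∩ s).Nonempty)
    (hne : s ≠ t) : #(s \ t) = 1 ∨ #(s \ t) = 2 := by
  have hsplit := card_sdiff_add_card_inter s t
  have hinter : 0 < #(s ∩ t) := card_pos.2 (inter_comm t s ▸ hst)
  have hnot_subset : ¬ s ⊆ t := fun h => hne (eq_of_subset_of_card_le h (by omega))
  have hdiff : 0 < #(s \ t) := card_pos.2 (sdiff_nonempty.2 hnot_subset)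
  omega

end Finset

open Finset

theorem mem_ISv {V : Type} [Fintype V] {Vset : Finset V} {E S : Finset (Finset V)} {k : ℕ}
    {X : Finset V} :
    X ∈ ISv Vset E S k ↔
      X ⊆ Vset ∧ #X = k ∧ (∀ e ∈ E, #e = 2 → ¬ e ⊆ X) ∧ ∀ e ∈ S, e ⊆ X := by
  simp only [ISv, mem_filter, mem_univ, true_and]

section Resolution

variable {V : Type} [Fintype V] [DecidableEq V] {E S : Finset (Finset V)}
  {r : Finset V → Finset V → Prop} {k : ℕ} {X : Finset V}

theorem mem_Iprime :
    X ∈ Iprime E r S k ↔ X ∈ ISv univ E S k ∧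
      ∀ e ∈ S, ∀ e' ∈ E, #e' = 3 → (e ∩ e').Nonempty → r e' e → ¬ e' ⊆ X :=
  mem_filter

theorem mem_Dset {v : V} :
    v ∈ Dset E S r ↔
      ∃ e ∈ S, ∃ e' ∈ E, #e' = 3 ∧ (e ∩ e').Nonempty ∧ r e' e ∧ e' \ e = {v} := by
  simp only [Dset, mem_filter, mem_univ, true_and]

theorem card_eq_three_of_mem_Rset {f : Finset V} (hf : f ∈ Rset E S r) : #f = 3 :=
  (mem_filter.1 hf).2.1

theorem mem_Nset {f : Finset V} :
    f ∈ Nset E S r ↔ ∃ e ∈ S, ∃ e' ∈ E,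
      #e' = 3 ∧ (e ∩ e').Nonempty ∧ r e' e ∧ #(e' \ e) = 2 ∧ e' \ e = f := by
  simp only [Nset, mem_image, mem_filter, mem_product, Prod.exists]
  exact ⟨fun ⟨e, e', ⟨⟨he, he'⟩, h⟩, hf⟩ => ⟨e, he, e', he', h.1, h.2.1, h.2.2.1, h.2.2.2, hf⟩,
    fun ⟨e, he, e', he', h3, hm, hp, h2, hf⟩ => ⟨e, e', ⟨⟨he, he'⟩, h3, hm, hp, h2⟩, hf⟩⟩

theorem mem_Eprime {f : Finset V} :
    f ∈ Eprime E S r ↔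
      ((f ∈ E ∧ f ∉ Rset E S r) ∨ f ∈ Nset E S r) ∧ f ⊆ univ \ Dset E S r := by
  simp only [Eprime, mem_filter, mem_union, mem_sdiff]

theorem not_sdiff_subset_of_mem_Iprime (hX : X ∈ Iprime E r S k) {e e' : Finset V}
    (he : e ∈ S) (he' : e' ∈ E) (hcard : #e' = 3) (hmeet : (e ∩ e').Nonempty)
    (hprec : r e' e) : ¬ e' \ e ⊆ X := by
  obtain ⟨hXI, hforbid⟩ := mem_Iprime.1 hX
  rw [sdiff_subset_iff_of_subset ((mem_ISv.1 hXI).2.2.2 e he)]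
  exact hforbid e he e' he' hcard hmeet hprec

theorem mem_ISv_resolved_of_mem_Iprime (hX : X ∈ Iprime E r S k) :
    X ∈ ISv (univ \ Dset E S r) (Eprime E S r) S k := by
  obtain ⟨-, hk, hindep, hS⟩ := mem_ISv.1 (mem_Iprime.1 hX).1
  have hXD : X ⊆ univ \ Dset E S r := by
    intro v hv
    rw [mem_sdiff, mem_Dset]
    refine ⟨mem_univ v, ?_⟩
    rintro ⟨e, he, e', he', hcard, hmeet, hprec, hsingle⟩
    exact not_sdiff_subset_of_mem_Iprime hX he he' hcard hmeet hprec
      (hsingle ▸ singleton_subset_iff.2 hv)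
  refine mem_ISv.2 ⟨hXD, hk, fun f hf hf2 hfX => ?_, hS⟩
  rcases (mem_Eprime.1 hf).1 with ⟨hfE, -⟩ | hfN
  · exact hindep f hfE hf2 hfX
  · obtain ⟨e, he, e', he', hcard, hmeet, hprec, -, rfl⟩ := mem_Nset.1 hfN
    exact not_sdiff_subset_of_mem_Iprime hX he he' hcard hmeet hprec hfX

theorem mem_Iprime_of_mem_ISv_resolved (hirrefl : ∀ e ∈ E, ¬ r e e)
    (hS : S ⊆ E.filter fun e => #e = 3) (hX : X ∈ ISv (univ \ Dset E S r) (Eprime E S r) S k) :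
    X ∈ Iprime E r S k := by
  obtain ⟨hXD, hk, hindep, hSX⟩ := mem_ISv.1 hX
  have hindepE : ∀ f ∈ E, #f = 2 → ¬ f ⊆ X := fun f hfE hf2 hfX =>
    hindep f (mem_Eprime.2 ⟨Or.inl ⟨hfE, fun hfR => by
      have := card_eq_three_of_mem_Rset hfR; omega⟩, hfX.trans hXD⟩) hf2 hfX
  refine mem_Iprime.2 ⟨mem_ISv.2 ⟨subset_univ X, hk, hindepE, hSX⟩, ?_⟩
  intro e he e' he' hcard hmeet hprec he'X
  obtain ⟨heE, he3⟩ := mem_filter.1 (hS he)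
  have hne : e' ≠ e := by
    rintro rfl
    exact hirrefl e' he' hprec
  have hdiffX : e' \ e ⊆ X := (sdiff_subset_iff_of_subset (hSX e he)).2 he'X
  rcases card_sdiff_eq_one_or_eq_two hcard he3 hmeet hne with h1 | h2
  · obtain ⟨v, hv⟩ := card_eq_one.1 h1
    have hvD : v ∈ Dset E S r := mem_Dset.2 ⟨e, he, e', he', hcard, hmeet, hprec, hv⟩
    exact (mem_sdiff.1 (hXD (hdiffX (hv ▸ mem_singleton_self v)))).2 hvD
  · have hN : e' \ e ∈ Nset E S r := mem_Nset.2 ⟨e, he, e', he', hcard, hmeet, hprec, h2, rfl⟩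
    exact hindep _ (mem_Eprime.2 ⟨Or.inr hN, hdiffX.trans hXD⟩) h2 hdiffX

end Resolution

theorem Iprime_eq_ISets_resolved_general {V : Type} [Fintype V] [DecidableEq V]
    (E : Finset (Finset V))
    (r : Finset V → Finset V → Prop)
    (hirrefl : ∀ e ∈ E, ¬ r e e)
    (S : Finset (Finset V)) (hS : S ⊆ E.filter fun e => e.card = 3) (k : ℕ) :
    Iprime E r S k = ISv (Finset.univ \ Dset E S r) (Eprime E S r) S k := by
  ext X
  exact ⟨mem_ISv_resolved_of_mem_Iprime, mem_Iprime_of_mem_ISv_resolved hirrefl hS⟩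

/-- **Resolving intersections in a 3-hypergraph.** With `H'` as constructed (vertex set
`V ∖ D`, hyperedge set `{e'' ∈ (E∖R) ∪ N : e'' ⊆ V∖D}`), we have `I'_S(H,k) = I_S(H',k)`. -/
theorem Iprime_eq_ISets_resolved {V : Type} [Fintype V] [DecidableEq V]
    (E : Finset (Finset V)) (hE : ∀ e ∈ E, e.card = 2 ∨ e.card = 3)
    (r : Finset V → Finset V → Prop)
    (hirrefl : ∀ e ∈ E, ¬ r e e)
    (htrans : ∀ e ∈ E, ∀ e' ∈ E, ∀ e'' ∈ E, r e e' → r e' e'' → r e e'')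
    (htotal : ∀ e ∈ E, ∀ e' ∈ E, e ≠ e' → r e e' ∨ r e' e)
    (S : Finset (Finset V)) (hS : S ⊆ E.filter fun e => e.card = 3) (k : ℕ) :
    Iprime E r S k = ISv (Finset.univ \ Dset E S r) (Eprime E S r) S k :=
  Iprime_eq_ISets_resolved_general E r hirrefl S hS k
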